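/- Let $u_1 : \overline{B_r(x_1)} \to \mathbb{R}$ be continuous with $u_1(x_1) > 0$, and suppose $\Delta u_1 \geq c_0 > 0$ in the open set $\Lambda \cap B_r(x_1)$ where $\Lambda = \{u_1 > 0\}$. Then $\sup_{\partial B_r(x_1)} u_1 \geq \frac{c_0}{2n} r^2$. -/

import Mathlib

/-!
For `0 ≤ α < c₀ / (2n)`, the function `u₁ - α‖x - x₁‖²` attains its maximum over the closed
ball at some `z`, where `u₁ > 0` since the maximum is at least `u₁ x₁ > 0`. At an interior
maximum every second partial `∂ᵢ∂ᵢu₁` is at most `2α`, so `Δu₁(z) ≤ 2nα < c₀`, which is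
impossible; hence `z` lies on the sphere and `α r² < u₁ z ≤ sup_{∂B} u₁`. Letting `α → c₀/(2n)`
gives the claim.

Since `fderiv` is `0` where a function is not differentiable, `lapl` carries no information
on the differentiability of `u₁`. But `∂ᵢ∂ᵢu₁(z) ≠ 0` forces `∂ᵢu₁` to be differentiable at
`z`, and then `∂ᵢu₁ ≠ 0`, so `u₁` is differentiable, at the points `z + t eᵢ` for small
`t > 0`. That suffices for a second-order Taylor lower bound along each ray `z ± t eᵢ`;
summing the two contradicts the maximality of `z`.
-/

open Real Metric Set

/-- The Laplacian of `u : ℝ^n → ℝ`, as the sum of second partial derivatives. -/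
noncomputable def lapl (n : ℕ) (u : EuclideanSpace ℝ (Fin n) → ℝ)
    (x : EuclideanSpace ℝ (Fin n)) : ℝ :=
  ∑ i : Fin n,
    fderiv ℝ (fun w => fderiv ℝ u w (EuclideanSpace.single i 1)) x (EuclideanSpace.single i 1)

open Filter Topology

theorem eventually_lt_of_hasDerivAt_of_ne_zero {g g' : ℝ → ℝ} {D m : ℝ}
    (hg : ∀ t, g' t ≠ 0 → HasDerivAt g (g' t) t) (hg₀ : ContinuousWithinAt g (Ici 0) 0)
    (hg' : HasDerivAt g' D 0) (hD : D ≠ 0) (hm : m < D) :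
    ∀ᶠ t in 𝓝[>] 0, g 0 + g' 0 * t + m / 2 * t ^ 2 < g t := by
  have hne : ∀ᶠ t in 𝓝[>] 0, g' t ≠ 0 :=
    (hg'.eventually_ne hD).filter_mono (nhdsGT_le_nhdsNE 0)
  have hslope : ∀ᶠ t in 𝓝[>] 0, m < slope g' 0 t :=
    ((hasDerivAt_iff_tendsto_slope.1 hg').mono_left (nhdsGT_le_nhdsNE 0)).eventually
      (lt_mem_nhds hm)
  obtain ⟨δ, hδ, hsub⟩ := mem_nhdsGT_iff_exists_Ioo_subset.1 (hne.and hslope)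
  set ψ : ℝ → ℝ := fun t => g t - g' 0 * t - m / 2 * t ^ 2
  have hψ' : ∀ t ∈ Ioo 0 δ, HasDerivAt ψ (g' t - g' 0 - m * t) t := by
    intro t ht
    have h := ((hg t (hsub ht).1).fun_sub ((hasDerivAt_id' t).const_mul (g' 0))).fun_sub
      ((hasDerivAt_pow 2 t).const_mul (m / 2))
    exact h.congr_deriv (by norm_num; ring)
  have hψ_pos : ∀ t ∈ Ioo 0 δ, 0 < g' t - g' 0 - m * t := by
    intro t ht
    have h := (hsub ht).2
    rw [slope_def_field, sub_zero, lt_div_iff₀ ht.1] at h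
    linarith
  have hψ_cont : ContinuousOn ψ (Ico 0 δ) := by
    refine ContinuousOn.sub (ContinuousOn.sub ?_ (by fun_prop)) (by fun_prop)
    intro t ht
    rcases ht.1.eq_or_lt with rfl | htpos
    · exact hg₀.mono Ico_subset_Ici_self
    · exact (hg t (hsub ⟨htpos, ht.2⟩).1).continuousAt.continuousWithinAt
  have hmono : StrictMonoOn ψ (Ico 0 δ) := by
    refine strictMonoOn_of_hasDerivWithinAt_pos (f' := fun t => g' t - g' 0 - m * t)
      (convex_Ico 0 δ) hψ_cont ?_ ?_ <;> rw [interior_Ico]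
    · exact fun t ht => (hψ' t ht).hasDerivWithinAt
    · exact hψ_pos
  filter_upwards [Ioo_mem_nhdsGT hδ] with t ht
  have := hmono (left_mem_Ico.2 hδ) (Ioo_subset_Ico_self ht) ht.1
  simp only [ψ] at this
  linarith

section
variable {E : Type*} [NormedAddCommGroup E] [NormedSpace ℝ E]

theorem differentiableAt_of_fderiv_apply_ne_zero {u : E → ℝ} {x w : E}
    (h : fderiv ℝ u x w ≠ 0) : DifferentiableAt ℝ u x := by
  by_contra hu
  simp [fderiv_zero_of_not_differentiableAt hu] at h

theorem hasDerivAt_comp_add_smul {f : E → ℝ} {z w : E} {t : ℝ}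
    (hf : DifferentiableAt ℝ f (z + t • w)) :
    HasDerivAt (fun s : ℝ => f (z + s • w)) (fderiv ℝ f (z + t • w) w) t :=
  hf.hasFDerivAt.comp_hasDerivAt t (((hasDerivAt_id t).smul_const w).const_add z |>.congr_deriv
    (one_smul ℝ w))

theorem eventually_lt_comp_add_smul {u : E → ℝ} {z w : E} {m : ℝ} (hu : ContinuousAt u z)
    (hD : fderiv ℝ (fun x => fderiv ℝ u x w) z w ≠ 0)
    (hm : m < fderiv ℝ (fun x => fderiv ℝ u x w) z w) :
    ∀ᶠ t in 𝓝[>] 0, u z + fderiv ℝ u z w * t + m / 2 * t ^ 2 < u (z + t • w) := by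
  have hz : z + (0 : ℝ) • w = z := by simp
  have hg' := hasDerivAt_comp_add_smul (f := fun x => fderiv ℝ u x w) (w := w) (t := 0)
    (hz ▸ differentiableAt_of_fderiv_apply_ne_zero hD)
  rw [hz] at hg'
  have h := eventually_lt_of_hasDerivAt_of_ne_zero
    (fun t ht => hasDerivAt_comp_add_smul (differentiableAt_of_fderiv_apply_ne_zero ht))
    (hu.comp_of_eq (f := fun t : ℝ => z + t • w) (by fun_prop) hz).continuousWithinAt hg' hD hm
  simpa only [hz] using h

end

section
variable {E : Type*} [NormedAddCommGroup E] [InnerProductSpace ℝ E]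

theorem fderiv_fderiv_neg_apply_neg (u : E → ℝ) (z w : E) :
    fderiv ℝ (fun x => fderiv ℝ u x (-w)) z (-w) = fderiv ℝ (fun x => fderiv ℝ u x w) z w := by
  simp [fderiv_fun_neg]

theorem norm_add_smul_sub_sq (z w x₀ : E) (t : ℝ) :
    ‖z + t • w - x₀‖ ^ 2 = ‖z - x₀‖ ^ 2 + 2 * t * inner ℝ (z - x₀) w + t ^ 2 * ‖w‖ ^ 2 := by
  rw [add_sub_right_comm, norm_add_sq_real, real_inner_smul_right, norm_smul, mul_pow,
    Real.norm_eq_abs, sq_abs]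
  ring

theorem fderiv_fderiv_apply_le_of_isLocalMax {u : E → ℝ} {z x₀ w : E} {α : ℝ} (hα : 0 ≤ α)
    (hu : ContinuousAt u z) (hmax : IsLocalMax (fun x => u x - α * ‖x - x₀‖ ^ 2) z) :
    fderiv ℝ (fun x => fderiv ℝ u x w) z w ≤ 2 * α * ‖w‖ ^ 2 := by
  set D := fderiv ℝ (fun x => fderiv ℝ u x w) z w
  by_contra! hlt
  obtain ⟨m, hαm, hmD⟩ := exists_between hlt
  have hD : D ≠ 0 := (lt_of_le_of_lt (by positivity) hlt).ne'
  have hfwd := eventually_lt_comp_add_smul hu hD hmD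
  have hbwd := eventually_lt_comp_add_smul (w := -w) hu
    (by rwa [fderiv_fderiv_neg_apply_neg]) (by rwa [fderiv_fderiv_neg_apply_neg])
  have hline : ∀ w' : E, Tendsto (fun t : ℝ => z + t • w') (𝓝[>] 0) (𝓝 z) := fun w' =>
    tendsto_nhdsWithin_of_tendsto_nhds <|
      (by fun_prop : Continuous fun t : ℝ => z + t • w').tendsto' 0 z (by simp)
  obtain ⟨t, ht, hp, hn, hmp, hmn⟩ := (eventually_mem_nhdsWithin.and <| hfwd.and <| hbwd.and <|
    ((hline w).eventually hmax).and ((hline (-w)).eventually hmax)).exists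
  simp only [norm_add_smul_sub_sq, map_neg, inner_neg_right, norm_neg] at hp hn hmp hmn
  have ht : 0 < t := ht
  nlinarith

end

theorem lapl_le_of_isLocalMax {n : ℕ} {u : EuclideanSpace ℝ (Fin n) → ℝ}
    {z x₀ : EuclideanSpace ℝ (Fin n)} {α : ℝ} (hα : 0 ≤ α) (hu : ContinuousAt u z)
    (hmax : IsLocalMax (fun x => u x - α * ‖x - x₀‖ ^ 2) z) :
    lapl n u z ≤ 2 * n * α :=
  calc lapl n u z ≤ ∑ _i : Fin n, 2 * α := Finset.sum_le_sum fun i _ =>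
        (fderiv_fderiv_apply_le_of_isLocalMax hα hu hmax).trans_eq (by simp)
    _ = 2 * n * α := by
      rw [Finset.sum_const, Finset.card_univ, Fintype.card_fin, nsmul_eq_mul]; ring

theorem mul_sq_le_sSup_image_sphere {n : ℕ} {x₀ : EuclideanSpace ℝ (Fin n)} {r c α : ℝ}
    {u : EuclideanSpace ℝ (Fin n) → ℝ} (hr : 0 ≤ r) (hα : 0 ≤ α) (hαc : 2 * n * α < c)
    (hcont : ContinuousOn u (closedBall x₀ r)) (hpos : 0 < u x₀)
    (hlap : ∀ x ∈ {x | 0 < u x} ∩ ball x₀ r, c ≤ lapl n u x) :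
    α * r ^ 2 ≤ sSup (u '' sphere x₀ r) := by
  obtain ⟨z, hz, hmax⟩ := (isCompact_closedBall x₀ r).exists_isMaxOn
    ⟨x₀, mem_closedBall_self hr⟩ (hcont.sub (by fun_prop) :
      ContinuousOn (fun x => u x - α * ‖x - x₀‖ ^ 2) (closedBall x₀ r))
  have hz_pos : α * ‖z - x₀‖ ^ 2 < u z := by
    have : u x₀ - α * ‖x₀ - x₀‖ ^ 2 ≤ u z - α * ‖z - x₀‖ ^ 2 := hmax (mem_closedBall_self hr)
    simp only [sub_self, norm_zero] at this
    linarith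
  rcases (mem_closedBall.1 hz).lt_or_eq with hz_ball | hz_sphere
  · replace hz_ball : z ∈ ball x₀ r := hz_ball
    have hnhds : closedBall x₀ r ∈ 𝓝 z :=
      mem_of_superset (isOpen_ball.mem_nhds hz_ball) ball_subset_closedBall
    have := lapl_le_of_isLocalMax hα (hcont.continuousAt hnhds) (hmax.isLocalMax hnhds)
    have := hlap z ⟨lt_of_le_of_lt (by positivity) hz_pos, hz_ball⟩
    linarith
  · rw [← dist_eq_norm, hz_sphere] at hz_pos
    have hbdd : BddAbove (u '' sphere x₀ r) :=
      ((isCompact_sphere x₀ r).image_of_continuousOn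
        (hcont.mono sphere_subset_closedBall)).bddAbove
    exact hz_pos.le.trans (le_csSup hbdd ⟨z, hz_sphere, rfl⟩)

/-- Non-degeneracy via the maximum principle: if `u₁` is continuous on a closed ball,
positive at the center, and `Δu₁ ≥ c₀ > 0` on `{u₁ > 0} ∩ B_r(x₁)`, then
`sup_{∂B_r(x₁)} u₁ ≥ (c₀/(2n)) r²`. -/
theorem stmt3 (n : ℕ) (x₁ : EuclideanSpace ℝ (Fin n)) (r c₀ : ℝ) (hr : 0 < r) (hc₀ : 0 < c₀)
    (u₁ : EuclideanSpace ℝ (Fin n) → ℝ)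
    (hcont : ContinuousOn u₁ (closedBall x₁ r))
    (hpos : 0 < u₁ x₁)
    (hlap : ∀ x ∈ {x | 0 < u₁ x} ∩ ball x₁ r, c₀ ≤ lapl n u₁ x) :
    c₀ / (2 * n) * r ^ 2 ≤ sSup (u₁ '' sphere x₁ r) := by
  refine le_of_forall_lt_imp_le_of_dense fun y hy => ?_
  have hr2 : 0 < r ^ 2 := by positivity
  rcases lt_or_ge y 0 with hy0 | hy0
  · have := mul_sq_le_sSup_image_sphere hr.le le_rfl (by simpa using hc₀) hcont hpos hlap
    linarith
  · have hn : (0 : ℝ) < n := by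
      rcases n.eq_zero_or_pos with rfl | hn
      · linarith [show c₀ / (2 * ((0 : ℕ) : ℝ)) * r ^ 2 = 0 by simp]
      · exact_mod_cast hn
    have hα : y / r ^ 2 < c₀ / (2 * n) := by rwa [div_lt_iff₀ hr2]
    have := mul_sq_le_sSup_image_sphere (α := y / r ^ 2) hr.le (by positivity)
      (by rwa [lt_div_iff₀' (by positivity)] at hα) hcont hpos hlap
    rwa [div_mul_cancel₀ _ hr2.ne'] at this
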